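/- Let p be a prime, q = p^r, m ≥ 1, and c ∈ 𝔽_q. With the convention 0^{−1} = 0, one has q² · #{z ∈ 𝔽_{q^m} : Tr_{𝔽_{q^m}/𝔽_q}(z) = 0 and Tr_{𝔽_{q^m}/𝔽_q}(z^{−1}) = c} = q^m + ε + Σ_{v ∈ 𝔽_q^*} χ(−cv) · Σ_{u ∈ 𝔽_q^*} S_{−1}^{(m)}(u, v), where ε = (q−1)² if c = 0 and ε = 1 − q if c ≠ 0. -/

import Mathlib

/-!
Write `χ` for the canonical character of `𝔽_q` and `e = χ ∘ Tr` for that of `𝔽_{q^m}` (transitivity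
of the trace). Orthogonality gives `q·[Tr z = 0] = Σ_u e(uz)` and
`q·[Tr z⁻¹ = c] = Σ_v χ(-cv) e(vz⁻¹)`; summing their product over `z`, `q²` times the count is
`Σ_{u,v} χ(-cv) Σ_{z ∈ 𝔽_{q^m}} e(uz + vz⁻¹)`.
The complete inner sum is `1 + S₋₁(u,v)`, the `1` coming from `z = 0`. The terms with `u = 0`
contribute `q^m`, those with `u ≠ 0 = v` vanish, and the remaining constants `1` add up to
`ε = (q - 1)·Σ_{v ≠ 0} χ(-cv)`.
-/

open Finset

/-- The canonical additive character of a finite field `K` of characteristic `p`: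
`e(x) = exp(2πi · Tr_{K/𝔽_p}(x) / p)`. -/
noncomputable def addChar (p : ℕ) (K : Type) [Field K] [Fintype K] [Algebra (ZMod p) K]
    (x : K) : ℂ :=
  Complex.exp (2 * Real.pi * Complex.I * ((Algebra.trace (ZMod p) K x).val : ℂ) / p)

namespace AddChar

variable {F E R : Type*} [CommMonoid R]

noncomputable def compTrace [CommRing F] (E : Type*) [CommRing E] [Algebra F E]
    (ψ : AddChar F R) : AddChar E R :=
  ψ.compAddMonoidHom (Algebra.trace F E).toAddMonoidHom

section CommRing

variable [CommRing F] [CommRing E] [Algebra F E]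

@[simp]
theorem compTrace_apply (ψ : AddChar F R) (x : E) : ψ.compTrace E x = ψ (Algebra.trace F E x) :=
  rfl

theorem compTrace_algebraMap_mul (ψ : AddChar F R) (a : F) (x : E) :
    ψ.compTrace E (algebraMap F E a * x) = ψ (a * Algebra.trace F E x) := by
  rw [compTrace_apply, ← Algebra.smul_def, LinearMap.map_smul, smul_eq_mul]

end CommRing

theorem IsPrimitive.compTrace [Field F] [Field E] [Algebra F E] [FiniteDimensional F E]
    [Algebra.IsSeparable F E] {ψ : AddChar F R} (hψ : ψ.IsPrimitive) :
    (ψ.compTrace E).IsPrimitive := by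
  refine IsPrimitive.of_ne_one fun h => hψ one_ne_zero ?_
  ext a
  obtain ⟨x, rfl⟩ := Algebra.trace_surjective F E a
  simpa using DFunLike.congr_fun h x

end AddChar

section Canonical

variable (p : ℕ) [Fact p.Prime] (K : Type) [Field K] [Algebra (ZMod p) K]

noncomputable def canonicalAddChar : AddChar K ℂ :=
  (ZMod.stdAddChar (N := p)).compTrace K

theorem canonicalAddChar_apply [Fintype K] (x : K) : canonicalAddChar p K x = addChar p K x := by
  simp [canonicalAddChar, addChar, ZMod.stdAddChar_apply, ZMod.toCircle_apply]

theorem isPrimitive_canonicalAddChar [Finite K] : (canonicalAddChar p K).IsPrimitive :=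
  (ZMod.isPrimitive_stdAddChar p).compTrace

theorem canonicalAddChar_eq_compTrace [Finite K] (E : Type) [Field E] [Finite E]
    [Algebra (ZMod p) E] [Algebra K E] [IsScalarTower (ZMod p) K E] :
    canonicalAddChar p E = (canonicalAddChar p K).compTrace E := by
  ext x
  simp [canonicalAddChar, Algebra.trace_trace]

end Canonical

theorem Fintype.sum_eq_add_sum_filter_ne {α M : Type*} [Fintype α] [DecidableEq α]
    [AddCommMonoid M] (a : α) (f : α → M) :
    ∑ x, f x = f a + ∑ x ∈ univ.filter (· ≠ a), f x := by
  rw [filter_ne', add_sum_erase _ _ (mem_univ a)]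

section Kloosterman

variable {K : Type*} [Field K] [Fintype K] [DecidableEq K]

noncomputable def kloostermanSum (ψ : AddChar K ℂ) (a b : K) : ℂ :=
  ∑ z ∈ univ.filter (· ≠ 0), ψ (a * z + b * z⁻¹)

theorem sum_addChar_mul_add_mul_inv (ψ : AddChar K ℂ) (a b : K) :
    ∑ z, ψ (a * z + b * z⁻¹) = 1 + kloostermanSum ψ a b := by
  rw [Fintype.sum_eq_add_sum_filter_ne 0, kloostermanSum]
  simp

theorem sum_addChar_mul_inv {ψ : AddChar K ℂ} (hψ : ψ.IsPrimitive) (b : K) :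
    ∑ z, ψ (b * z⁻¹) = if b = 0 then (Fintype.card K : ℂ) else 0 := by
  calc ∑ z, ψ (b * z⁻¹) = ∑ z, ψ (z * b) :=
        Fintype.sum_bijective _ inv_involutive.bijective _ _ fun z => by rw [mul_comm]
    _ = _ := by rw [AddChar.sum_mulShift b hψ, Nat.cast_ite, Nat.cast_zero]

theorem sum_filter_ne_zero_addChar_mul {ψ : AddChar K ℂ} (hψ : ψ.IsPrimitive) (a : K) :
    ∑ v ∈ univ.filter (· ≠ 0), ψ (v * a) = if a = 0 then (Fintype.card K : ℂ) - 1 else -1 := by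
  have h := AddChar.sum_mulShift a hψ
  rw [Fintype.sum_eq_add_sum_filter_ne 0] at h
  simp only [zero_mul, AddChar.map_zero_eq_one, Nat.cast_ite, Nat.cast_zero] at h
  split_ifs at h ⊢ <;> linear_combination h

end Kloosterman

section Traces

variable {F E : Type*} [Field F] [Fintype F] [DecidableEq F] [Field E] [Fintype E] [Algebra F E]
  {ψ : AddChar F ℂ}

theorem card_sq_mul_card_traces_eq_sum (hψ : ψ.IsPrimitive) (c : F) :
    (Fintype.card F : ℂ) ^ 2 *
        Nat.card {z : E // Algebra.trace F E z = 0 ∧ Algebra.trace F E z⁻¹ = c} =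
      ∑ u, ∑ v, ψ (-(c * v)) *
        ∑ z : E, ψ.compTrace E (algebraMap F E u * z + algebraMap F E v * z⁻¹) := by
  set q : ℂ := (Fintype.card F : ℂ)
  have trace_eq_zero (z : E) : (if Algebra.trace F E z = 0 then q else 0) =
      ∑ u, ψ.compTrace E (algebraMap F E u * z) := by
    simp_rw [AddChar.compTrace_algebraMap_mul, AddChar.sum_mulShift _ hψ, Nat.cast_ite,
      Nat.cast_zero, q]
  have trace_inv_eq (z : E) : (if Algebra.trace F E z⁻¹ = c then q else 0) =
      ∑ v, ψ (-(c * v)) * ψ.compTrace E (algebraMap F E v * z⁻¹) := by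
    simp_rw [AddChar.compTrace_algebraMap_mul, ← AddChar.map_add_eq_mul,
      show ∀ v, -(c * v) + v * Algebra.trace F E z⁻¹ = v * (Algebra.trace F E z⁻¹ - c) from
        fun v => by ring,
      AddChar.sum_mulShift _ hψ, sub_eq_zero, Nat.cast_ite, Nat.cast_zero, q]
  calc q ^ 2 * Nat.card {z : E // Algebra.trace F E z = 0 ∧ Algebra.trace F E z⁻¹ = c}
      = ∑ z : E, (if Algebra.trace F E z = 0 then q else 0) *
          (if Algebra.trace F E z⁻¹ = c then q else 0) := by
        rw [Nat.card_eq_fintype_card, Fintype.card_subtype, card_filter, Nat.cast_sum, mul_sum]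
        refine sum_congr rfl fun z _ => ?_
        split_ifs <;> simp_all [sq]
    _ = ∑ z : E, ∑ u, ∑ v, ψ (-(c * v)) *
          ψ.compTrace E (algebraMap F E u * z + algebraMap F E v * z⁻¹) := by
        simp_rw [trace_eq_zero, trace_inv_eq, sum_mul_sum, AddChar.map_add_eq_mul]
        exact sum_congr rfl fun z _ => sum_congr rfl fun u _ => sum_congr rfl fun v _ => by ring
    _ = _ := by
        simp_rw [mul_sum]
        rw [sum_comm]
        exact sum_congr rfl fun u _ => sum_comm

theorem card_sq_mul_card_traces_eq [DecidableEq E] (hψ : ψ.IsPrimitive) (c : F) :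
    (Fintype.card F : ℂ) ^ 2 *
        Nat.card {z : E // Algebra.trace F E z = 0 ∧ Algebra.trace F E z⁻¹ = c} =
      (Fintype.card E : ℂ) +
        (if c = 0 then ((Fintype.card F : ℂ) - 1) ^ 2 else 1 - (Fintype.card F : ℂ)) +
        ∑ v ∈ univ.filter (· ≠ 0), ψ (-(c * v)) *
          ∑ u ∈ univ.filter (· ≠ 0),
            kloostermanSum (ψ.compTrace E) (algebraMap F E u) (algebraMap F E v) := by
  set q : ℂ := (Fintype.card F : ℂ)
  have hΨ : (ψ.compTrace E).IsPrimitive := hψ.compTrace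
  have u_zero_part : ∑ v, ψ (-(c * v)) *
      ∑ z : E, ψ.compTrace E (algebraMap F E 0 * z + algebraMap F E v * z⁻¹) = Fintype.card E := by
    simp_rw [map_zero, zero_mul, zero_add, sum_addChar_mul_inv hΨ, map_eq_zero, mul_ite, mul_zero]
    simp
  have u_ne_zero_part {u : F} (hu : u ≠ 0) : ∑ v, ψ (-(c * v)) *
      ∑ z : E, ψ.compTrace E (algebraMap F E u * z + algebraMap F E v * z⁻¹) =
        ∑ v ∈ univ.filter (· ≠ 0), (ψ (-(c * v)) +
          ψ (-(c * v)) * kloostermanSum (ψ.compTrace E) (algebraMap F E u) (algebraMap F E v)) := by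
    have v_zero_term :
        ∑ z : E, ψ.compTrace E (algebraMap F E u * z + algebraMap F E 0 * z⁻¹) = 0 := by
      simpa [mul_comm, hu] using AddChar.sum_mulShift (algebraMap F E u) hΨ
    rw [Fintype.sum_eq_add_sum_filter_ne 0, v_zero_term, mul_zero, zero_add]
    simp_rw [sum_addChar_mul_add_mul_inv, mul_one_add]
  have sum_char : ∑ v ∈ univ.filter (· ≠ 0), ψ (-(c * v)) = if c = 0 then q - 1 else -1 := by
    simpa [mul_comm] using sum_filter_ne_zero_addChar_mul hψ (-c)
  have card_units : ((univ.filter (· ≠ (0 : F))).card : ℂ) = q - 1 := by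
    rw [filter_ne', card_erase_of_mem (mem_univ 0), card_univ, Nat.cast_sub Fintype.card_pos,
      Nat.cast_one]
  rw [card_sq_mul_card_traces_eq_sum hψ, Fintype.sum_eq_add_sum_filter_ne 0, u_zero_part,
    sum_congr rfl fun u hu => u_ne_zero_part (mem_filter.1 hu).2]
  simp_rw [sum_add_distrib, sum_const, sum_char, nsmul_eq_mul, card_units, mul_sum]
  rw [sum_comm (s := univ.filter (· ≠ 0)) (t := univ.filter (· ≠ 0))]
  split_ifs <;> ring

end Traces

theorem count_prescribed_traces_kloosterman_general
    (p r m : ℕ) (hp : p.Prime)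
    (F E : Type) [Field F] [Fintype F] [DecidableEq F] [Field E] [Fintype E] [DecidableEq E]
    [Algebra (ZMod p) F] [Algebra (ZMod p) E] [Algebra F E]
    (hF : Fintype.card F = p ^ r) (hE : Fintype.card E = (p ^ r) ^ m)
    (c : F) :
    ((p : ℂ) ^ r) ^ 2 *
      (Nat.card {z : E // Algebra.trace F E z = 0 ∧ Algebra.trace F E z⁻¹ = c} : ℂ) =
      ((p : ℂ) ^ r) ^ m +
        (if c = 0 then ((p : ℂ) ^ r - 1) ^ 2 else 1 - (p : ℂ) ^ r) +
        ∑ v ∈ Finset.univ.filter (fun v : F => v ≠ 0),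
          addChar p F (-(c * v)) *
            ∑ u ∈ Finset.univ.filter (fun u : F => u ≠ 0),
              ∑ z ∈ Finset.univ.filter (fun z : E => z ≠ 0),
                addChar p E (algebraMap F E u * z + algebraMap F E v * z⁻¹) := by
  have : Fact p.Prime := ⟨hp⟩
  have : IsScalarTower (ZMod p) F E := .of_algebraMap_eq' (Subsingleton.elim _ _)
  have key := card_sq_mul_card_traces_eq (E := E) (isPrimitive_canonicalAddChar p F) c
  simp only [hF, hE, Nat.cast_pow, kloostermanSum, ← canonicalAddChar_eq_compTrace,
    canonicalAddChar_apply] at key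
  exact key

/-- Let `p` be a prime, `q = p^r`, `m ≥ 1`, `c ∈ 𝔽_q`.  With the convention `0⁻¹ = 0`,
`q²·#{z ∈ 𝔽_{q^m} : Tr_{𝔽_{q^m}/𝔽_q}(z) = 0, Tr_{𝔽_{q^m}/𝔽_q}(z⁻¹) = c}
  = q^m + ε + Σ_{v ∈ 𝔽_q^*} χ(-cv) Σ_{u ∈ 𝔽_q^*} S₋₁^{(m)}(u,v)`,
where `ε = (q-1)²` if `c = 0` and `ε = 1 - q` if `c ≠ 0`. -/
theorem count_prescribed_traces_kloosterman
    (p r m : ℕ) (hp : p.Prime) (hr : 0 < r) (hm : 0 < m)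
    (F E : Type) [Field F] [Fintype F] [DecidableEq F] [Field E] [Fintype E] [DecidableEq E]
    [Algebra (ZMod p) F] [Algebra (ZMod p) E] [Algebra F E]
    (hF : Fintype.card F = p ^ r) (hE : Fintype.card E = (p ^ r) ^ m)
    (c : F) :
    ((p : ℂ) ^ r) ^ 2 *
      (Nat.card {z : E // Algebra.trace F E z = 0 ∧ Algebra.trace F E z⁻¹ = c} : ℂ) =
      ((p : ℂ) ^ r) ^ m +
        (if c = 0 then ((p : ℂ) ^ r - 1) ^ 2 else 1 - (p : ℂ) ^ r) +
        ∑ v ∈ Finset.univ.filter (fun v : F => v ≠ 0),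
          addChar p F (-(c * v)) *
            ∑ u ∈ Finset.univ.filter (fun u : F => u ≠ 0),
              ∑ z ∈ Finset.univ.filter (fun z : E => z ≠ 0),
                addChar p E (algebraMap F E u * z + algebraMap F E v * z⁻¹) :=
  count_prescribed_traces_kloosterman_general p r m hp F E hF hE c
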